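/- In type A₂ with exchange relations from the pentagon, the variables defined by y₃ = (q₂ y₂ + q₄ q₅)/y₁, y₄ = (q₃ y₃ + q₅ q₁)/y₂, y₅ = (q₄ y₄ + q₁ q₂)/y₃ satisfy (q₅ y₅ + q₂ q₃)/y₄ = y₁ and (q₁ y₁ + q₃ q₄)/y₅ = y₂; in particular y₅ = (q₃ q₄ + q₁ y₁)/y₂. -/

import Mathlib

/-!
Clearing denominators, `y₅ y₃ y₁ y₂ = q₄ y₁ (y₄ y₂) + q₁ q₂ y₁ y₂` collapses, after substituting the
first two exchange relations, to `(q₃ q₄ + q₁ y₁) y₃ y₁`; cancelling `y₃ y₁` gives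
`y₅ y₂ = q₃ q₄ + q₁ y₁`, from which the two closing relations are linear identities.
The divisions are by nonzero elements because, with denominators cleared, each `yᵢ` has as
numerator a polynomial with positive coefficients, which does not vanish at the all-ones point.
-/

open MvPolynomial

section PentagonRecurrence

variable {K : Type*} [Field K] {q₁ q₂ q₃ q₄ q₅ y₁ y₂ y₃ y₄ y₅ : K}

theorem pentagon_y₅_mul_y₂ (hy₁ : y₁ ≠ 0) (hy₂ : y₂ ≠ 0) (hN₃ : q₂ * y₂ + q₄ * q₅ ≠ 0)
    (h₃ : y₃ = (q₂ * y₂ + q₄ * q₅) / y₁) (h₄ : y₄ = (q₃ * y₃ + q₅ * q₁) / y₂)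
    (h₅ : y₅ = (q₄ * y₄ + q₁ * q₂) / y₃) :
    y₅ * y₂ = q₃ * q₄ + q₁ * y₁ := by
  have e₃ : y₃ * y₁ = q₂ * y₂ + q₄ * q₅ := by rw [h₃, div_mul_cancel₀ _ hy₁]
  have hy₃ : y₃ ≠ 0 := left_ne_zero_of_mul (e₃ ▸ hN₃)
  have e₄ : y₄ * y₂ = q₃ * y₃ + q₅ * q₁ := by rw [h₄, div_mul_cancel₀ _ hy₂]
  have e₅ : y₅ * y₃ = q₄ * y₄ + q₁ * q₂ := by rw [h₅, div_mul_cancel₀ _ hy₃]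
  apply mul_left_cancel₀ (mul_ne_zero hy₃ hy₁)
  linear_combination y₁ * y₂ * e₅ + q₄ * y₁ * e₄ - q₁ * y₁ * e₃

theorem pentagon_exchange_close (hy₁ : y₁ ≠ 0) (hy₂ : y₂ ≠ 0) (hN₃ : q₂ * y₂ + q₄ * q₅ ≠ 0)
    (hN₄ : q₃ * (q₂ * y₂ + q₄ * q₅) + q₅ * q₁ * y₁ ≠ 0) (hN₅ : q₃ * q₄ + q₁ * y₁ ≠ 0)
    (h₃ : y₃ = (q₂ * y₂ + q₄ * q₅) / y₁) (h₄ : y₄ = (q₃ * y₃ + q₅ * q₁) / y₂)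
    (h₅ : y₅ = (q₄ * y₄ + q₁ * q₂) / y₃) :
    (q₅ * y₅ + q₂ * q₃) / y₄ = y₁ ∧ (q₁ * y₁ + q₃ * q₄) / y₅ = y₂ ∧
      y₅ = (q₃ * q₄ + q₁ * y₁) / y₂ := by
  have e₃ : y₃ * y₁ = q₂ * y₂ + q₄ * q₅ := by rw [h₃, div_mul_cancel₀ _ hy₁]
  have e₄ : y₄ * y₂ = q₃ * y₃ + q₅ * q₁ := by rw [h₄, div_mul_cancel₀ _ hy₂]
  have e₅ := pentagon_y₅_mul_y₂ hy₁ hy₂ hN₃ h₃ h₄ h₅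
  have hy₄ : y₄ ≠ 0 := by
    rintro rfl
    exact hN₄ (by linear_combination -y₁ * e₄ - q₃ * e₃)
  have hy₅ : y₅ ≠ 0 := by
    rintro rfl
    exact hN₅ (by linear_combination -e₅)
  refine ⟨?_, ?_, ?_⟩
  · rw [div_eq_iff hy₄]
    apply mul_left_cancel₀ hy₂
    linear_combination q₅ * e₅ - y₁ * e₄ - q₃ * e₃
  · rw [div_eq_iff hy₅]
    linear_combination -e₅
  · rw [eq_div_iff hy₂]
    exact e₅

end PentagonRecurrence

theorem MvPolynomial.algebraMap_ne_zero_of_eval_ne_zero {σ R K : Type*} [CommRing R]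
    [CommRing K] [Algebra (MvPolynomial σ R) K] [IsFractionRing (MvPolynomial σ R) K]
    {p : MvPolynomial σ R} (x : σ → R) (h : eval x p ≠ 0) :
    algebraMap (MvPolynomial σ R) K p ≠ 0 :=
  (map_ne_zero_iff _ (IsFractionRing.injective _ K)).mpr (ne_of_apply_ne (eval x) (by simpa))

/-- In type `A₂`, the pentagon exchange relations close up: with
`y₃ = (q₂y₂ + q₄q₅)/y₁`, `y₄ = (q₃y₃ + q₅q₁)/y₂`, `y₅ = (q₄y₄ + q₁q₂)/y₃`
in the field `ℚ(q₁,…,q₅,y₁,y₂)`, one has `(q₅y₅ + q₂q₃)/y₄ = y₁` and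
`(q₁y₁ + q₃q₄)/y₅ = y₂`; in particular `y₅ = (q₃q₄ + q₁y₁)/y₂`. -/
theorem pentagon_exchange_relations_close
    (q₁ q₂ q₃ q₄ q₅ y₁ y₂ : FractionRing (MvPolynomial (Fin 7) ℚ))
    (hq₁ : q₁ = algebraMap (MvPolynomial (Fin 7) ℚ) (FractionRing (MvPolynomial (Fin 7) ℚ)) (X 0))
    (hq₂ : q₂ = algebraMap (MvPolynomial (Fin 7) ℚ) (FractionRing (MvPolynomial (Fin 7) ℚ)) (X 1))
    (hq₃ : q₃ = algebraMap (MvPolynomial (Fin 7) ℚ) (FractionRing (MvPolynomial (Fin 7) ℚ)) (X 2))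
    (hq₄ : q₄ = algebraMap (MvPolynomial (Fin 7) ℚ) (FractionRing (MvPolynomial (Fin 7) ℚ)) (X 3))
    (hq₅ : q₅ = algebraMap (MvPolynomial (Fin 7) ℚ) (FractionRing (MvPolynomial (Fin 7) ℚ)) (X 4))
    (hy₁ : y₁ = algebraMap (MvPolynomial (Fin 7) ℚ) (FractionRing (MvPolynomial (Fin 7) ℚ)) (X 5))
    (hy₂ : y₂ = algebraMap (MvPolynomial (Fin 7) ℚ) (FractionRing (MvPolynomial (Fin 7) ℚ)) (X 6))
    (y₃ y₄ y₅ : FractionRing (MvPolynomial (Fin 7) ℚ))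
    (h₃ : y₃ = (q₂ * y₂ + q₄ * q₅) / y₁)
    (h₄ : y₄ = (q₃ * y₃ + q₅ * q₁) / y₂)
    (h₅ : y₅ = (q₄ * y₄ + q₁ * q₂) / y₃) :
    (q₅ * y₅ + q₂ * q₃) / y₄ = y₁ ∧ (q₁ * y₁ + q₃ * q₄) / y₅ = y₂ ∧
      y₅ = (q₃ * q₄ + q₁ * y₁) / y₂ := by
  refine pentagon_exchange_close ?_ ?_ ?_ ?_ ?_ h₃ h₄ h₅ <;>
  · subst hq₁ hq₂ hq₃ hq₄ hq₅ hy₁ hy₂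
    simp only [← map_mul, ← map_add, ne_eq]
    exact algebraMap_ne_zero_of_eval_ne_zero (fun _ => 1) (by norm_num)
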